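/- For every permutation π ∈ S_n, the generating function for partitions μ such that (μ, π) is a standard labeled partition with at most n parts is q^{maj(π)}/(q)_n, i.e., Σ_{μ : (μ,π) standard} q^{|μ|} = q^{maj(π)} / ∏_{i=1}^n (1-q^i). -/

import Mathlib

open Finset

def maj {n : ℕ} (π : Equiv.Perm (Fin n)) : ℕ :=
  ∑ i ∈ Finset.range n, if h : i + 1 < n then
    (if π ⟨i + 1, h⟩ < π ⟨i, Nat.lt_of_succ_lt h⟩ then i + 1 else 0) else 0

/-- A labeled partition `(μ, π)` is standard if `π i > π (i+1)` implies `μ i > μ (i+1)`. -/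
def IsStandard {n : ℕ} (μ : Fin n → ℕ) (π : Equiv.Perm (Fin n)) : Prop :=
  ∀ i : ℕ, ∀ h : i + 1 < n,
    π ⟨i + 1, h⟩ < π ⟨i, Nat.lt_of_succ_lt h⟩ → μ ⟨i + 1, h⟩ < μ ⟨i, Nat.lt_of_succ_lt h⟩

/-- `(q)_n = ∏_{i=1}^n (1 - q^i)` as a formal power series. -/
noncomputable def qPoch (n : ℕ) : PowerSeries ℚ :=
  ∏ i ∈ Finset.range n, (1 - PowerSeries.X ^ (i + 1))

/-!
Write `d_i ∈ {0, 1}` for the descent indicator of `π` at `i`. Since `μ_n = 0`, the pair `(μ, π)`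
is standard exactly when the gaps `ν_i = μ_i - μ_{i+1} - d_i` are all nonnegative, and
`μ_i = ∑_{j ≥ i} (ν_j + d_j)` recovers `μ` from arbitrary `ν ∈ ℕⁿ`. Summing,
`|μ| = ∑ (i + 1) ν_i + maj π`, so the count is the coefficient of `q^{|μ| - maj π}` in the
generating function of `ν` weighted by `∑ (i + 1) ν_i`, which is `1/(q)_n`: sorting the solutions
of `∑ w_i ν_i = k` by whether `ν_0 = 0` gives `(1 - q^{w_0}) F_w = F_{tail w}`.
-/

open PowerSeries

lemma sum_range_sum_Ico {M : Type*} [AddCommMonoid M] (f : ℕ → M) (n : ℕ) :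
    ∑ i ∈ range n, ∑ j ∈ Ico i n, f j = ∑ j ∈ range n, (j + 1) • f j := by
  rw [sum_comm' (t' := range n) (s' := fun j => range (j + 1)) (fun i j => by
    simp only [mem_range, mem_Ico]; omega)]
  simp

section StandardLabeledPartition

variable {n : ℕ}

def descentIndicator (π : Equiv.Perm (Fin n)) (i : ℕ) : ℕ :=
  if h : i + 1 < n then (if π ⟨i + 1, h⟩ < π ⟨i, Nat.lt_of_succ_lt h⟩ then 1 else 0) else 0

lemma descentIndicator_of_le (π : Equiv.Perm (Fin n)) {i : ℕ} (h : n ≤ i + 1) :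
    descentIndicator π i = 0 :=
  dif_neg (by omega)

lemma maj_eq_sum_descentIndicator (π : Equiv.Perm (Fin n)) :
    maj π = ∑ i ∈ range n, (i + 1) * descentIndicator π i := by
  refine sum_congr rfl fun i _ => ?_
  unfold descentIndicator
  split_ifs <;> simp

def extendByZero (μ : Fin n → ℕ) (j : ℕ) : ℕ := if h : j < n then μ ⟨j, h⟩ else 0

@[simp] lemma extendByZero_val (μ : Fin n → ℕ) (i : Fin n) : extendByZero μ i = μ i :=
  dif_pos i.isLt

lemma extendByZero_of_le (μ : Fin n → ℕ) {j : ℕ} (h : n ≤ j) : extendByZero μ j = 0 :=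
  dif_neg (by omega)

lemma antitone_and_isStandard_iff (μ : Fin n → ℕ) (π : Equiv.Perm (Fin n)) :
    Antitone μ ∧ IsStandard μ π ↔
      ∀ j, extendByZero μ (j + 1) + descentIndicator π j ≤ extendByZero μ j := by
  constructor
  · rintro ⟨hanti, hstd⟩ j
    by_cases h : j + 1 < n
    · have hμ := hanti (show (⟨j, by omega⟩ : Fin n) ≤ ⟨j + 1, h⟩ from
        Fin.mk_le_mk.2 (by omega))
      have := hstd j h
      simp only [descentIndicator, extendByZero, dif_pos h, dif_pos (Nat.lt_of_succ_lt h)]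
      split_ifs <;> omega
    · simp [extendByZero_of_le μ (not_lt.1 h), descentIndicator_of_le π (not_lt.1 h)]
  · intro h
    have hanti : Antitone (extendByZero μ) :=
      antitone_nat_of_succ_le fun j => (Nat.le_add_right _ _).trans (h j)
    refine ⟨fun i i' hii' => ?_, fun i hi hd => ?_⟩
    · simpa using hanti (Fin.le_def.1 hii')
    · have := h i
      simp only [descentIndicator, extendByZero, dif_pos hi, dif_pos (Nat.lt_of_succ_lt hi),
        if_pos hd] at this
      omega

def ofGaps (π : Equiv.Perm (Fin n)) (ν : Fin n → ℕ) (i : Fin n) : ℕ :=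
  ∑ j ∈ Ico (i : ℕ) n, (extendByZero ν j + descentIndicator π j)

lemma extendByZero_ofGaps_eq_sum (π : Equiv.Perm (Fin n)) (ν : Fin n → ℕ) (j : ℕ) :
    extendByZero (ofGaps π ν) j = ∑ l ∈ Ico j n, (extendByZero ν l + descentIndicator π l) := by
  by_cases hj : j < n
  · exact dif_pos hj
  · rw [extendByZero_of_le _ (not_lt.1 hj), Ico_eq_empty (by omega), sum_empty]

lemma extendByZero_ofGaps (π : Equiv.Perm (Fin n)) (ν : Fin n → ℕ) (j : ℕ) :
    extendByZero (ofGaps π ν) j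
      = extendByZero ν j + descentIndicator π j + extendByZero (ofGaps π ν) (j + 1) := by
  rw [extendByZero_ofGaps_eq_sum, extendByZero_ofGaps_eq_sum]
  by_cases hj : j < n
  · exact sum_eq_sum_Ico_succ_bot hj _
  · rw [Ico_eq_empty (by omega), Ico_eq_empty (by omega), extendByZero_of_le _ (not_lt.1 hj),
      descentIndicator_of_le π (by omega)]
    simp

lemma ofGaps_isStandard (π : Equiv.Perm (Fin n)) (ν : Fin n → ℕ) :
    Antitone (ofGaps π ν) ∧ IsStandard (ofGaps π ν) π :=
  (antitone_and_isStandard_iff _ π).2 fun j => by rw [extendByZero_ofGaps π ν j]; omega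

lemma ofGaps_injective (π : Equiv.Perm (Fin n)) : Function.Injective (ofGaps π) := by
  intro ν ν' h
  funext i
  have h₁ := extendByZero_ofGaps π ν i
  have h₂ := extendByZero_ofGaps π ν' i
  rw [h] at h₁
  simp only [extendByZero_val] at h₁ h₂
  omega

lemma exists_ofGaps_eq {π : Equiv.Perm (Fin n)} {μ : Fin n → ℕ}
    (hμ : Antitone μ ∧ IsStandard μ π) :
    ∃ ν, ofGaps π ν = μ := by
  rw [antitone_and_isStandard_iff] at hμ
  let ν (i : Fin n) := extendByZero μ i - extendByZero μ (i + 1) - descentIndicator π i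
  have hext : ∀ j ≤ n, extendByZero (ofGaps π ν) j = extendByZero μ j := by
    refine fun j hj => Nat.decreasingInduction (fun j hj ih => ?_) ?_ hj
    · rw [extendByZero_ofGaps, ih]
      have hν : extendByZero ν j
          = extendByZero μ j - extendByZero μ (j + 1) - descentIndicator π j := dif_pos hj
      have := hμ j
      omega
    · simp [extendByZero_of_le]
  exact ⟨ν, funext fun i => by simpa using hext i i.isLt.le⟩

lemma sum_ofGaps (π : Equiv.Perm (Fin n)) (ν : Fin n → ℕ) :
    ∑ i, ofGaps π ν i = ∑ i : Fin n, ((i : ℕ) + 1) * ν i + maj π := by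
  have hν : ∑ i : Fin n, ((i : ℕ) + 1) * ν i = ∑ j ∈ range n, (j + 1) * extendByZero ν j := by
    rw [← Fin.sum_univ_eq_sum_range]
    simp
  rw [hν, maj_eq_sum_descentIndicator, ← sum_add_distrib]
  simp only [ofGaps]
  rw [Fin.sum_univ_eq_sum_range
    (fun i => ∑ j ∈ Ico i n, (extendByZero ν j + descentIndicator π j)), sum_range_sum_Ico]
  simp [mul_add]

lemma card_standard_eq_card_gaps (π : Equiv.Perm (Fin n)) (m : ℕ) :
    Nat.card {μ : Fin n → ℕ // Antitone μ ∧ IsStandard μ π ∧ ∑ i, μ i = m}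
      = Nat.card {ν : Fin n → ℕ // ∑ i : Fin n, ((i : ℕ) + 1) * ν i + maj π = m} := by
  refine (Nat.card_congr (Equiv.ofBijective (fun ν => ⟨ofGaps π ν.1,
    (ofGaps_isStandard π ν.1).1, (ofGaps_isStandard π ν.1).2, by rw [sum_ofGaps, ν.2]⟩)
      ⟨fun ν ν' h => Subtype.ext (ofGaps_injective π (congrArg Subtype.val h)), ?_⟩)).symm
  rintro ⟨μ, hanti, hstd, hsum⟩
  obtain ⟨ν, rfl⟩ := exists_ofGaps_eq ⟨hanti, hstd⟩
  exact ⟨⟨ν, by rwa [sum_ofGaps] at hsum⟩, rfl⟩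

end StandardLabeledPartition

section WeightedCount

variable {n : ℕ}

lemma finite_weighted_solutions {ι : Type*} [Fintype ι] {w : ι → ℕ} (hw : ∀ i, 0 < w i)
    (k : ℕ) : Finite {ν : ι → ℕ // ∑ i, w i * ν i = k} := by
  refine ((Set.Finite.pi fun _ => Set.finite_Iic k).subset
    fun ν (hν : ∑ i, w i * ν i = k) i _ => ?_).to_subtype
  calc ν i ≤ w i * ν i := Nat.le_mul_of_pos_left _ (hw i)
    _ ≤ ∑ j, w j * ν j :=
      single_le_sum (f := fun j => w j * ν j) (fun j _ => Nat.zero_le _) (mem_univ i)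
    _ = k := hν

lemma sum_mul_add_single {ι : Type*} [Fintype ι] [DecidableEq ι] (w ν : ι → ℕ) (j : ι) :
    ∑ i, w i * (ν + Pi.single j 1 : ι → ℕ) i = ∑ i, w i * ν i + w j := by
  simp [mul_add, sum_add_distrib, Pi.single_apply]

lemma sub_single_add_single {ι : Type*} [DecidableEq ι] {ν : ι → ℕ} {j : ι} (h : ν j ≠ 0) :
    ν - Pi.single j 1 + Pi.single j 1 = ν := by
  funext i
  by_cases hi : i = j
  · subst hi; simp; omega
  · simp [hi]

noncomputable def weightedCount (w : Fin n → ℕ) (k : ℕ) : ℕ :=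
  Nat.card {ν : Fin n → ℕ // ∑ i, w i * ν i = k}

noncomputable def weightedGenFun (R : Type*) [CommRing R] (w : Fin n → ℕ) : R⟦X⟧ :=
  mk fun k => (weightedCount w k : R)

variable {R : Type*} [CommRing R]

lemma coeff_X_pow_mul_weightedGenFun (w : Fin n → ℕ) (c k : ℕ) :
    coeff k (X ^ c * weightedGenFun R w : R⟦X⟧)
      = Nat.card {ν : Fin n → ℕ // ∑ i, w i * ν i + c = k} := by
  rw [coeff_X_pow_mul']
  split_ifs with hc
  · rw [weightedGenFun, coeff_mk, weightedCount]
    exact congrArg _ (Nat.card_congr (Equiv.subtypeEquivRight fun ν => by omega))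
  · have : IsEmpty {ν : Fin n → ℕ // ∑ i, w i * ν i + c = k} := ⟨fun ν => by omega⟩
    simp

lemma weightedCount_eq_tail_add (w : Fin (n + 1) → ℕ) (hw : ∀ i, 0 < w i) (k : ℕ) :
    weightedCount w k = weightedCount (Fin.tail w) k
      + Nat.card {ν : Fin (n + 1) → ℕ // ∑ i, w i * ν i + w 0 = k} := by
  have := finite_weighted_solutions hw k
  rw [weightedCount, ← Nat.card_congr (Equiv.sumCompl
    fun ν : {ν : Fin (n + 1) → ℕ // ∑ i, w i * ν i = k} => ν.1 0 = 0), Nat.card_sum]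
  congr 1
  · refine Nat.card_congr
      { toFun := fun ν => ⟨Fin.tail ν.1.1, ?_⟩
        invFun := fun ν =>
          ⟨⟨Fin.cons 0 ν.1, by simpa [Fin.sum_univ_succ, Fin.tail] using ν.2⟩, rfl⟩
        left_inv := fun ν => ?_
        right_inv := fun ν => by simp }
    · simpa [Fin.sum_univ_succ, Fin.tail, ν.2] using ν.1.2
    · ext1; ext1; funext i
      cases i using Fin.cases <;> simp [ν.2, Fin.tail]
  · refine Nat.card_congr
      { toFun := fun ν => ⟨ν.1.1 - Pi.single 0 1, ?_⟩
        invFun := fun ν =>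
          ⟨⟨ν.1 + Pi.single (0 : Fin (n + 1)) 1, by rw [sum_mul_add_single, ν.2]⟩, by simp⟩
        left_inv := fun ν => ?_
        right_inv := fun ν => by simp }
    · rw [← sum_mul_add_single, sub_single_add_single ν.2]
      exact ν.1.2
    · ext1; ext1; exact sub_single_add_single ν.2

lemma weightedGenFun_mul_one_sub (w : Fin (n + 1) → ℕ) (hw : ∀ i, 0 < w i) :
    weightedGenFun R w * (1 - X ^ w 0) = weightedGenFun R (Fin.tail w) := by
  ext k
  rw [mul_one_sub, map_sub, mul_comm, coeff_X_pow_mul_weightedGenFun, weightedGenFun,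
    weightedGenFun, coeff_mk, coeff_mk, weightedCount_eq_tail_add w hw]
  push_cast
  ring

theorem weightedGenFun_mul_prod_one_sub (w : Fin n → ℕ) (hw : ∀ i, 0 < w i) :
    weightedGenFun R w * ∏ i, (1 - X ^ w i) = 1 := by
  induction n with
  | zero =>
    ext k
    cases k <;> simp [weightedGenFun, weightedCount]
  | succ n ih =>
    rw [Fin.prod_univ_succ, ← mul_assoc, weightedGenFun_mul_one_sub w hw]
    exact ih (Fin.tail w) fun i => hw i.succ

end WeightedCount

lemma inv_qPoch (n : ℕ) : (qPoch n)⁻¹ = weightedGenFun ℚ fun i : Fin n => (i : ℕ) + 1 := by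
  have h : weightedGenFun ℚ (fun i : Fin n => (i : ℕ) + 1) * qPoch n = 1 := by
    rw [qPoch, ← Fin.prod_univ_eq_prod_range (fun i => 1 - X ^ (i + 1))]
    exact weightedGenFun_mul_prod_one_sub _ fun i => Nat.succ_pos i
  rw [PowerSeries.inv_eq_iff_mul_eq_one, h]
  exact right_ne_zero_of_mul_eq_one (by rw [← map_mul, h, map_one])

/-- The generating function, by size, for the partitions `μ` with at most `n` parts such
that `(μ, π)` is a standard labeled partition is `q^{maj π}/(q)_n` (stated
coefficientwise). -/
theorem genfun_standard_labeled (n : ℕ) (π : Equiv.Perm (Fin n)) (m : ℕ) :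
    (Nat.card {μ : Fin n → ℕ // Antitone μ ∧ IsStandard μ π ∧ ∑ i, μ i = m} : ℚ)
      = PowerSeries.coeff m (PowerSeries.X ^ maj π * (qPoch n)⁻¹) := by
  rw [card_standard_eq_card_gaps, inv_qPoch, coeff_X_pow_mul_weightedGenFun]
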